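/- Let 1 < p_k ≤ H < ∞ for all k. Then the γ-dual of l(r,s,t,p;B) equals the set of all sequences a = (a_k) for which there exists L ∈ ℕ with sup_n Σ_k |e_{nk} L^{-1}|^{p_k'} < ∞, where E = (e_{nk}) is the triangle associated to a defined by e_{nk} = r_k [ a_k/(u s_0 t_k) + Σ_{j=k}^{k+1} (-1)^{j-k}(D^{(s)}_{j-k}/t_j) Σ_{l=k+1}^n ((-v)^{l-j}/u^{l-j+1}) a_l + Σ_{j=k+2}^n (-1)^{j-k}(D^{(s)}_{j-k}/t_j) Σ_{l=j}^n ((-v)^{l-j}/u^{l-j+1}) a_l ]. -/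

import Mathlib

open Filter Finset Topology

/-- The `A(r,s,t;B)`-transform: `(A(r,s,t)·B(u,v) x)_n`. -/
noncomputable def GmB (r s t : ℕ → ℂ) (u v : ℂ) (x : ℕ → ℂ) (n : ℕ) : ℂ :=
  (r n)⁻¹ * ((∑ k ∈ Finset.range n, (s (n - k) * t k * u + s (n - k - 1) * t (k + 1) * v) * x k)
    + s 0 * t n * u * x n)

/-- The triangle `E = (e_{nk})` associated with a sequence `a`. -/
noncomputable def Emat (s t r : ℕ → ℂ) (u v : ℂ) (D : ℕ → ℂ) (a : ℕ → ℂ) (n k : ℕ) : ℂ :=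
  if k ≤ n then
    r k * (a k / (u * s 0 * t k)
      + ∑ j ∈ Finset.Icc k (k + 1), (-1 : ℂ) ^ (j - k) * (D (j - k) / t j) *
          (∑ l ∈ Finset.Icc (k + 1) n, ((-v) ^ (l - j) / u ^ (l - j + 1)) * a l)
      + ∑ j ∈ Finset.Icc (k + 2) n, (-1 : ℂ) ^ (j - k) * (D (j - k) / t j) *
          (∑ l ∈ Finset.Icc j n, ((-v) ^ (l - j) / u ^ (l - j + 1)) * a l))
  else 0

/-!
Put `y = A(r,s,t;B) x`. In `ℂ⟦X⟧` the triangle acts as `x ↦ r⁻¹ · S · (t · (u + vX) x)` with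
`S = ∑ s_k X^k`, and it is inverted by `∑ (-1)^k D_k X^k = S⁻¹` and
`(u + vX)⁻¹ = ∑ (-v)^m / u^(m+1) X^m`; transposing these multiplications on the section `[0, n]`
gives `∑_{k ≤ n} a_k x_k = ∑_{k ≤ n} e_{nk} y_k`. As every `y` comes from some `x`, `a` lies in
the γ-dual iff `E` maps `ℓ(p)` to sequences with bounded partial row sums, which is the
Lascarides–Maddox condition. Sufficiency is Young's inequality `|e y| ≤ |e/L|^{p'} + L^H |y|^p`.
Necessity is a gliding hump: if no `L` works, `y` is glued from disjoint blocks, each a scaled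
Hölder-extremal vector `conj e |e|^{p'-2}` of a row whose tail beyond the earlier blocks is large,
while column bounds keep the contribution of the earlier blocks under control.
-/

lemma sum_range_succ_add_sum_Ioc {M : Type*} [AddCommMonoid M] (f : ℕ → M) {a b : ℕ}
    (h : a ≤ b) : ∑ k ∈ range (a + 1), f k + ∑ k ∈ Ioc a b, f k = ∑ k ∈ range (b + 1), f k := by
  rw [← sum_range_add_sum_Ico f (Nat.succ_le_succ h)]
  congr 2
  ext k
  simp only [mem_Ico, mem_Ioc]
  omega

lemma holderConjugate_div_sub_one {p : ℝ} (hp : 1 < p) : (p / (p - 1)).HolderConjugate p :=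
  (Real.HolderConjugate.conjExponent hp).symm

lemma norm_mul_le_rpow_add_rpow {p H L : ℝ} (hp : 1 < p) (hpH : p ≤ H) (hL : 1 ≤ L) (c y : ℂ) :
    ‖c * y‖ ≤ ‖c * (L : ℂ)⁻¹‖ ^ (p / (p - 1)) + L ^ H * ‖y‖ ^ p := by
  have hpq := holderConjugate_div_sub_one hp
  have hL0 : 0 < L := by linarith
  have hsplit : ‖c * y‖ = ‖c * (L : ℂ)⁻¹‖ * (L * ‖y‖) := by
    rw [norm_mul, norm_mul, norm_inv, Complex.norm_real, Real.norm_of_nonneg hL0.le]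
    field_simp
  have hyoung := Real.young_inequality_of_nonneg (norm_nonneg (c * (L : ℂ)⁻¹))
    (mul_nonneg hL0.le (norm_nonneg y)) hpq
  have h1 := div_le_self (Real.rpow_nonneg (norm_nonneg (c * (L : ℂ)⁻¹)) (p / (p - 1)))
    hpq.lt.le
  have h2 := div_le_self (Real.rpow_nonneg (mul_nonneg hL0.le (norm_nonneg y)) p) hp.le
  have h3 : (L * ‖y‖) ^ p ≤ L ^ H * ‖y‖ ^ p := by
    rw [Real.mul_rpow hL0.le (norm_nonneg y)]
    gcongr
  linarith

noncomputable def dualVec (c : ℂ) (q : ℝ) : ℂ := starRingEnd ℂ c * (‖c‖ ^ (q - 2) : ℝ)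

lemma mul_dualVec (c : ℂ) {q : ℝ} (hq : q ≠ 0) : c * dualVec c q = (‖c‖ ^ q : ℝ) := by
  rcases eq_or_ne c 0 with rfl | hc
  · simp [dualVec, Real.zero_rpow hq]
  have hc' : 0 < ‖c‖ := norm_pos_iff.2 hc
  rw [dualVec, ← mul_assoc, Complex.mul_conj, Complex.normSq_eq_norm_sq, ← Complex.ofReal_mul,
    ← Real.rpow_natCast, ← Real.rpow_add hc']
  norm_num

lemma norm_dualVec (c : ℂ) {q : ℝ} (hq : q ≠ 1) : ‖dualVec c q‖ = ‖c‖ ^ (q - 1) := by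
  rcases eq_or_ne c 0 with rfl | hc
  · simp [dualVec, Real.zero_rpow (sub_ne_zero.2 hq)]
  have hc' : 0 < ‖c‖ := norm_pos_iff.2 hc
  rw [dualVec, norm_mul, Complex.norm_conj, Complex.norm_real,
    Real.norm_of_nonneg (Real.rpow_nonneg hc'.le _), show q - 1 = 1 + (q - 2) by ring,
    Real.rpow_add hc', Real.rpow_one]

lemma norm_ofReal_mul_dualVec_rpow_le {p μ : ℝ} (hp : 1 < p) (hμ0 : 0 ≤ μ) (hμ1 : μ ≤ 1)
    (c : ℂ) : ‖(μ : ℂ) * dualVec c (p / (p - 1))‖ ^ p ≤ μ * ‖c‖ ^ (p / (p - 1)) := by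
  have hpq := holderConjugate_div_sub_one hp
  rw [norm_mul, norm_dualVec _ hpq.lt.ne', Complex.norm_real, Real.norm_of_nonneg hμ0,
    Real.mul_rpow hμ0 (Real.rpow_nonneg (norm_nonneg _) _), ← Real.rpow_mul (norm_nonneg _),
    hpq.sub_one_mul_conj]
  gcongr
  exact Real.rpow_le_self_of_le_one hμ0 hμ1 hp.le

noncomputable def glueBlocks {M : Type*} [AddCommMonoid M] [TopologicalSpace M] (K : ℕ → ℕ)
    (Z : ℕ → ℕ → M) (k : ℕ) : M :=
  ∑' m, (Set.Ioc (K m) (K (m + 1))).indicator (Z m) k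

section glueBlocks

variable {M : Type*} [AddCommMonoid M] [TopologicalSpace M] {K : ℕ → ℕ} {Z : ℕ → ℕ → M}

lemma glueBlocks_eq (hK : StrictMono K) {m k : ℕ} (hk : k ∈ Ioc (K m) (K (m + 1))) :
    glueBlocks K Z k = Z m k := by
  rw [mem_Ioc] at hk
  rw [glueBlocks, tsum_eq_single m fun j hj => Set.indicator_of_notMem ?_ _,
    Set.indicator_of_mem (Set.mem_Ioc.2 hk)]
  rintro ⟨hjk, hkj⟩
  rcases hj.lt_or_gt with h | h
  · have := hK.monotone (show j + 1 ≤ m by omega)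
    omega
  · have := hK.monotone (show m + 1 ≤ j by omega)
    omega

lemma glueBlocks_eq_zero (hK : Monotone K) {k : ℕ} (hk : k ≤ K 0) : glueBlocks K Z k = 0 := by
  have (m : ℕ) : (Set.Ioc (K m) (K (m + 1))).indicator (Z m) k = 0 :=
    Set.indicator_of_notMem (fun h => (hk.trans (hK m.zero_le)).not_gt h.1) _
  simp [glueBlocks, this]

end glueBlocks

section glueBlocksRpow

variable {p : ℕ → ℝ} {K : ℕ → ℕ} {Z : ℕ → ℕ → ℂ}

lemma sum_range_rpow_glueBlocks_le (hp : ∀ k, 0 < p k) (hK : StrictMono K)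
    (hZ : ∀ m, ∑ k ∈ Ioc (K m) (K (m + 1)), ‖Z m k‖ ^ p k ≤ (1 / 2) ^ (m + 1)) (m : ℕ) :
    ∑ k ∈ range (K m + 1), ‖glueBlocks K Z k‖ ^ p k ≤ 1 - (1 / 2) ^ m := by
  induction m with
  | zero =>
    rw [sum_eq_zero fun k hk => by
      rw [glueBlocks_eq_zero hK.monotone (Nat.lt_succ_iff.1 (mem_range.1 hk)), norm_zero,
        Real.zero_rpow (hp k).ne']]
    norm_num
  | succ m ih =>
    have hblock : ∑ k ∈ Ioc (K m) (K (m + 1)), ‖glueBlocks K Z k‖ ^ p k =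
        ∑ k ∈ Ioc (K m) (K (m + 1)), ‖Z m k‖ ^ p k :=
      sum_congr rfl fun k hk => by rw [glueBlocks_eq hK hk]
    rw [← sum_range_succ_add_sum_Ioc _ (hK (Nat.lt_add_one m)).le, hblock]
    have := hZ m
    rw [pow_succ] at this ⊢
    linarith

lemma sum_range_rpow_glueBlocks_le_one (hp : ∀ k, 0 < p k) (hK : StrictMono K)
    (hZ : ∀ m, ∑ k ∈ Ioc (K m) (K (m + 1)), ‖Z m k‖ ^ p k ≤ (1 / 2) ^ (m + 1)) (n : ℕ) :
    ∑ k ∈ range n, ‖glueBlocks K Z k‖ ^ p k ≤ 1 :=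
  calc ∑ k ∈ range n, ‖glueBlocks K Z k‖ ^ p k
      ≤ ∑ k ∈ range (K n + 1), ‖glueBlocks K Z k‖ ^ p k :=
        sum_le_sum_of_subset_of_nonneg (range_subset_range.2 (Nat.le_succ_of_le (hK.id_le n)))
          fun k _ _ => by positivity
    _ ≤ 1 := (sum_range_rpow_glueBlocks_le hp hK hZ n).trans (by simp)

lemma norm_glueBlocks_le_one (hp : ∀ k, 0 < p k) (hK : StrictMono K)
    (hZ : ∀ m, ∑ k ∈ Ioc (K m) (K (m + 1)), ‖Z m k‖ ^ p k ≤ (1 / 2) ^ (m + 1)) (k : ℕ) :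
    ‖glueBlocks K Z k‖ ≤ 1 := by
  have h : ‖glueBlocks K Z k‖ ^ p k ≤ 1 :=
    (single_le_sum (f := fun j => ‖glueBlocks K Z j‖ ^ p j) (fun j _ => by positivity)
      (self_mem_range_succ k)).trans (sum_range_rpow_glueBlocks_le_one hp hK hZ (k + 1))
  by_contra! h'
  exact h.not_gt (Real.one_lt_rpow h' (hp k))

lemma summable_rpow_glueBlocks (hp : ∀ k, 0 < p k) (hK : StrictMono K)
    (hZ : ∀ m, ∑ k ∈ Ioc (K m) (K (m + 1)), ‖Z m k‖ ^ p k ≤ (1 / 2) ^ (m + 1)) :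
    Summable fun k => ‖glueBlocks K Z k‖ ^ p k :=
  summable_of_sum_range_le (fun k => by positivity) (sum_range_rpow_glueBlocks_le_one hp hK hZ)

end glueBlocksRpow

def MapsLpToBounded (e : ℕ → ℕ → ℂ) (p : ℕ → ℝ) : Prop :=
  ∀ y : ℕ → ℂ, (Summable fun k => ‖y k‖ ^ p k) →
    BddAbove (Set.range fun n => ‖∑ k ∈ range (n + 1), e n k * y k‖)

def ConjRowBounded (e : ℕ → ℕ → ℂ) (p : ℕ → ℝ) : Prop :=
  ∃ L : ℕ, 1 ≤ L ∧ ∃ C : ℝ, ∀ n : ℕ,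
    ∑ k ∈ range (n + 1), ‖e n k * (L : ℂ)⁻¹‖ ^ (p k / (p k - 1)) ≤ C

section LascaridesMaddox

variable {e : ℕ → ℕ → ℂ} {p : ℕ → ℝ}

theorem MapsLpToBounded.of_conjRowBounded {H : ℝ} (hp : ∀ k, 1 < p k) (hpH : ∀ k, p k ≤ H)
    (h : ConjRowBounded e p) : MapsLpToBounded e p := by
  obtain ⟨L, hL, C, hC⟩ := h
  intro y hy
  refine ⟨C + (L : ℝ) ^ H * ∑' k, ‖y k‖ ^ p k, ?_⟩
  rintro _ ⟨n, rfl⟩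
  have hyoung (k : ℕ) :=
    norm_mul_le_rpow_add_rpow (hp k) (hpH k) (Nat.one_le_cast.2 hL) (e n k) (y k)
  push_cast at hyoung
  calc ‖∑ k ∈ range (n + 1), e n k * y k‖
      ≤ ∑ k ∈ range (n + 1), ‖e n k * y k‖ := norm_sum_le _ _
    _ ≤ ∑ k ∈ range (n + 1),
          (‖e n k * (L : ℂ)⁻¹‖ ^ (p k / (p k - 1)) + L ^ H * ‖y k‖ ^ p k) :=
        sum_le_sum fun k _ => hyoung k
    _ ≤ C + (L : ℝ) ^ H * ∑' k, ‖y k‖ ^ p k := by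
        rw [sum_add_distrib, ← mul_sum]
        gcongr
        · exact hC n
        · exact hy.sum_le_tsum _ fun k _ => by positivity

lemma MapsLpToBounded.exists_norm_le (hp : ∀ k, 0 < p k) (h : MapsLpToBounded e p) :
    ∃ col : ℕ → ℝ, ∀ n k, k ≤ n → ‖e n k‖ ≤ col k := by
  have hsingle (k : ℕ) : Summable fun j => ‖(Pi.single k 1 : ℕ → ℂ) j‖ ^ p j :=
    summable_of_ne_finset_zero (s := {k}) fun j hj => by
      simp [show j ≠ k by simpa using hj, Real.zero_rpow (hp j).ne']
  choose col hcol using fun k => h _ (hsingle k)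
  refine ⟨col, fun n k hkn => ?_⟩
  simpa [Pi.single_apply, Nat.lt_succ_of_le hkn] using hcol k ⟨n, rfl⟩

lemma exists_lt_sum_Ioc_of_not_conjRowBounded (hp : ∀ k, 1 < p k) {col : ℕ → ℝ}
    (hcol : ∀ n k, k ≤ n → ‖e n k‖ ≤ col k) (hunb : ¬ ConjRowBounded e p) (K : ℕ) {L : ℕ}
    (hL : 1 ≤ L) (T : ℝ) :
    ∃ n, K < n ∧ T < ∑ k ∈ Ioc K n, ‖e n k * (L : ℂ)⁻¹‖ ^ (p k / (p k - 1)) := by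
  set Hd := ∑ k ∈ range (K + 1), col k ^ (p k / (p k - 1))
  simp only [ConjRowBounded, not_exists, not_and, not_forall, not_le] at hunb
  obtain ⟨n, hn⟩ := hunb L hL (Hd + |T|)
  have hhead (j : ℕ) (hjn : j ≤ n) (hjK : j ≤ K) :
      ∑ k ∈ range (j + 1), ‖e n k * (L : ℂ)⁻¹‖ ^ (p k / (p k - 1)) ≤ Hd := by
    refine (sum_le_sum fun k hk => ?_).trans
      (sum_le_sum_of_subset_of_nonneg (range_subset_range.2 (by omega)) fun k _ _ => ?_)
    · refine Real.rpow_le_rpow (norm_nonneg _) ?_ (holderConjugate_div_sub_one (hp k)).nonneg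
      calc ‖e n k * (L : ℂ)⁻¹‖ = ‖e n k‖ * (L : ℝ)⁻¹ := by simp
        _ ≤ ‖e n k‖ :=
          mul_le_of_le_one_right (norm_nonneg _) (inv_le_one_of_one_le₀ (Nat.one_le_cast.2 hL))
        _ ≤ col k := hcol n k (by rw [mem_range] at hk; omega)
    · exact Real.rpow_nonneg ((norm_nonneg _).trans (hcol k k le_rfl)) _
  have hKn : K < n := by
    by_contra! hnK
    linarith [hhead n le_rfl hnK, abs_nonneg T]
  rw [← sum_range_succ_add_sum_Ioc _ hKn.le] at hn
  exact ⟨n, hKn, by linarith [hhead K hKn.le le_rfl, le_abs_self T]⟩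

lemma exists_hump (hp : ∀ k, 1 < p k) {col : ℕ → ℝ} (hcol : ∀ n k, k ≤ n → ‖e n k‖ ≤ col k)
    (hunb : ¬ ConjRowBounded e p) (K : ℕ) {T δ : ℝ} (hT : 0 < T) (hδ : 0 < δ) :
    ∃ n, K < n ∧ ∃ z : ℕ → ℂ,
      ∑ k ∈ Ioc K n, ‖z k‖ ^ p k ≤ δ ∧ ∑ k ∈ Ioc K n, e n k * z k = T := by
  obtain ⟨L, hTL⟩ := exists_nat_gt (T / δ)
  have hL0 : (0 : ℝ) < L := (div_pos hT hδ).trans hTL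
  have hL : 1 ≤ L := Nat.cast_pos.1 hL0
  obtain ⟨n, hKn, hTS⟩ := exists_lt_sum_Ioc_of_not_conjRowBounded hp hcol hunb K hL T
  set q : ℕ → ℝ := fun k => p k / (p k - 1)
  set c : ℕ → ℂ := fun k => e n k * (L : ℂ)⁻¹
  set S := ∑ k ∈ Ioc K n, ‖c k‖ ^ q k
  have hS : 0 < S := hT.trans hTS
  -- `μ` makes the pairing of the block with row `n` exactly `T`; its mass is then at most `T / L`.
  set μ : ℝ := T / (S * L)
  have hμ0 : 0 < μ := by positivity
  have hμ1 : μ ≤ 1 := by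
    rw [div_le_one (by positivity)]
    nlinarith [(Nat.one_le_cast.2 hL : (1 : ℝ) ≤ L)]
  refine ⟨n, hKn, fun k => (μ : ℂ) * dualVec (c k) (q k), ?_, ?_⟩
  · calc ∑ k ∈ Ioc K n, ‖(μ : ℂ) * dualVec (c k) (q k)‖ ^ p k
        ≤ ∑ k ∈ Ioc K n, μ * ‖c k‖ ^ q k :=
          sum_le_sum fun k _ => norm_ofReal_mul_dualVec_rpow_le (hp k) hμ0.le hμ1 _
      _ = T / L := by
          rw [← mul_sum]
          change μ * S = T / L
          simp only [μ]
          field_simp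
      _ ≤ δ := by
          rw [div_lt_iff₀ hδ] at hTL
          rw [div_le_iff₀ hL0]
          linarith
  · calc ∑ k ∈ Ioc K n, e n k * ((μ : ℂ) * dualVec (c k) (q k))
        = ((μ * L * S : ℝ) : ℂ) := by
          rw [Complex.ofReal_mul, Complex.ofReal_sum, mul_sum]
          refine sum_congr rfl fun k _ => ?_
          have hek : e n k = c k * L :=
            (inv_mul_cancel_right₀ (Nat.cast_ne_zero.2 (by omega)) _).symm
          rw [hek, ← mul_dualVec _ (holderConjugate_div_sub_one (hp k)).pos.ne']
          push_cast
          ring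
      _ = T := by
          simp only [μ]
          field_simp

lemma exists_not_bddAbove_of_humps (hp : ∀ k, 0 < p k) {col : ℕ → ℝ}
    (hcol : ∀ n k, k ≤ n → ‖e n k‖ ≤ col k)
    (hump : ∀ (K : ℕ) (T δ : ℝ), 0 < T → 0 < δ → ∃ n, K < n ∧ ∃ z : ℕ → ℂ,
      ∑ k ∈ Ioc K n, ‖z k‖ ^ p k ≤ δ ∧ ∑ k ∈ Ioc K n, e n k * z k = T) :
    ∃ y : ℕ → ℂ, (Summable fun k => ‖y k‖ ^ p k) ∧
      ¬ BddAbove (Set.range fun n => ‖∑ k ∈ range (n + 1), e n k * y k‖) := by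
  set B : ℕ → ℝ := fun K => ∑ k ∈ range (K + 1), col k
  have hB0 (K : ℕ) : 0 ≤ B K := sum_nonneg fun k _ => (norm_nonneg _).trans (hcol k k le_rfl)
  -- Block `m` has mass at most `2^{-(m+1)}` and pairs with its row to `m + 1 + B K`, while the
  -- earlier blocks contribute at most `B K` to that row.
  choose N hN Z hZ hZe using fun (m K : ℕ) => hump K (m + 1 + B K) ((1 / 2) ^ (m + 1))
    (by linarith [hB0 K]) (by positivity)
  let K : ℕ → ℕ := fun m => Nat.rec 0 (fun m Km => N m Km) m
  have hK : StrictMono K := strictMono_nat_of_lt_succ fun m => hN m (K m)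
  have hZK (m : ℕ) := hZ m (K m)
  set y := glueBlocks K fun m => Z m (K m)
  refine ⟨y, summable_rpow_glueBlocks hp hK hZK, ?_⟩
  rintro ⟨b, hb⟩
  obtain ⟨m, hm⟩ := exists_nat_gt b
  set n := K (m + 1)
  have hrow : ∑ k ∈ range (n + 1), e n k * y k =
      ∑ k ∈ range (K m + 1), e n k * y k + ((m + 1 + B (K m) : ℝ) : ℂ) := by
    rw [← sum_range_succ_add_sum_Ioc _ (hK (Nat.lt_add_one m)).le, ← hZe m (K m)]
    exact congrArg _ (sum_congr rfl fun k hk => by rw [show y k = _ from glueBlocks_eq hK hk])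
  have hhead : ‖∑ k ∈ range (K m + 1), e n k * y k‖ ≤ B (K m) :=
    (norm_sum_le _ _).trans (sum_le_sum fun k hk => by
      rw [norm_mul]
      refine (mul_le_of_le_one_right (norm_nonneg _) (norm_glueBlocks_le_one hp hK hZK k)).trans
        (hcol _ _ ?_)
      have := hK (Nat.lt_add_one m)
      rw [mem_range] at hk
      omega)
  have hlower : (m + 1 + B (K m) : ℝ) ≤
      ‖∑ k ∈ range (n + 1), e n k * y k‖ + ‖∑ k ∈ range (K m + 1), e n k * y k‖ := calc
    (m + 1 + B (K m) : ℝ) = ‖((m + 1 + B (K m) : ℝ) : ℂ)‖ := by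
      rw [Complex.norm_real, Real.norm_of_nonneg (by linarith [hB0 (K m)])]
    _ = ‖∑ k ∈ range (n + 1), e n k * y k - ∑ k ∈ range (K m + 1), e n k * y k‖ := by
      rw [hrow, add_sub_cancel_left]
    _ ≤ _ := norm_sub_le _ _
  linarith [hb ⟨n, rfl⟩]

theorem ConjRowBounded.of_mapsLpToBounded (hp : ∀ k, 1 < p k) (h : MapsLpToBounded e p) :
    ConjRowBounded e p := by
  by_contra hunb
  have hp0 (k : ℕ) : 0 < p k := one_pos.trans (hp k)
  obtain ⟨col, hcol⟩ := h.exists_norm_le hp0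
  obtain ⟨y, hy, hunbdd⟩ := exists_not_bddAbove_of_humps hp0 hcol
    fun K _ _ hT hδ => exists_hump hp hcol hunb K hT hδ
  exact hunbdd (h y hy)

theorem mapsLpToBounded_iff_conjRowBounded {H : ℝ} (hp : ∀ k, 1 < p k) (hpH : ∀ k, p k ≤ H) :
    MapsLpToBounded e p ↔ ConjRowBounded e p :=
  ⟨ConjRowBounded.of_mapsLpToBounded hp, MapsLpToBounded.of_conjRowBounded hp hpH⟩

end LascaridesMaddox

open PowerSeries

lemma sum_range_mul_coeff_mul {R : Type*} [CommSemiring R] (a : ℕ → R) (f g : R⟦X⟧) (n : ℕ) :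
    ∑ k ∈ range (n + 1), a k * coeff k (f * g) =
      ∑ j ∈ range (n + 1), (∑ l ∈ Icc j n, coeff (l - j) f * a l) * coeff j g := by
  simp_rw [mul_comm f g, coeff_mul,
    Nat.sum_antidiagonal_eq_sum_range_succ fun i j => coeff i g * coeff j f, mul_sum, sum_mul]
  refine (sum_comm' fun k j => ?_).trans
    (sum_congr rfl fun j _ => sum_congr rfl fun k _ => by ring)
  simp only [mem_range, mem_Icc]
  omega

lemma mk_coeff_eq_self {R : Type*} [Semiring R] (f : R⟦X⟧) :
    PowerSeries.mk (fun n => coeff n f) = f :=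
  ext fun n => coeff_mk n _

noncomputable def bandSeries (u v : ℂ) : ℂ⟦X⟧ := C u + C v * X

lemma coeff_bandSeries_mul (u v : ℂ) (f : ℂ⟦X⟧) (n : ℕ) :
    coeff n (bandSeries u v * f) = u * coeff n f + v * coeff n (X * f) := by
  rw [bandSeries, add_mul, mul_assoc, map_add, coeff_C_mul, coeff_C_mul]

lemma mk_mul_bandSeries {u : ℂ} (hu : u ≠ 0) (v : ℂ) :
    PowerSeries.mk (fun m => (-v) ^ m / u ^ (m + 1)) * bandSeries u v = 1 := by
  ext n
  rw [mul_comm, coeff_bandSeries_mul, coeff_one]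
  rcases n with _ | n
  · simp [coeff_zero_X_mul, hu]
  · rw [coeff_succ_X_mul, coeff_mk, coeff_mk, if_neg n.succ_ne_zero]
    field_simp
    ring

section Triangle

variable {r s t D : ℕ → ℂ} {u v : ℂ}

lemma mk_alternating_mul_mk_eq_one
    (hD : ∀ n, ∑ k ∈ range (n + 1), (-1 : ℂ) ^ k * D k * s (n - k) = if n = 0 then 1 else 0) :
    PowerSeries.mk (fun k => (-1 : ℂ) ^ k * D k) * PowerSeries.mk s = 1 := by
  ext n
  rw [coeff_mul, coeff_one, ← hD n, Nat.sum_antidiagonal_eq_sum_range_succ fun i j =>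
    coeff i (PowerSeries.mk fun k => (-1 : ℂ) ^ k * D k) * coeff j (PowerSeries.mk s)]
  simp only [coeff_mk]

lemma mk_mul_GmB (hr : ∀ n, r n ≠ 0) (x : ℕ → ℂ) :
    PowerSeries.mk (fun n => r n * GmB r s t u v x n) =
      PowerSeries.mk s *
        PowerSeries.mk fun k => t k * coeff k (bandSeries u v * PowerSeries.mk x) := by
  ext n
  rw [coeff_mk, GmB, mul_inv_cancel_left₀ (hr n), mul_comm (PowerSeries.mk s), coeff_mul,
    Nat.sum_antidiagonal_eq_sum_range_succ fun i j =>
      coeff i (PowerSeries.mk fun k => t k * coeff k (bandSeries u v * PowerSeries.mk x)) *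
        coeff j (PowerSeries.mk s)]
  simp only [coeff_mk, coeff_bandSeries_mul, mul_add, add_mul, sum_add_distrib]
  rw [sum_range_succ (fun k => t k * (u * x k) * s (n - k)),
    sum_range_succ' (fun k => t k * (v * coeff k (X * PowerSeries.mk x)) * s (n - k))]
  simp only [coeff_succ_X_mul, coeff_zero_X_mul, coeff_mk, Nat.sub_self, Nat.sub_add_eq,
    mul_zero, zero_mul, add_zero]
  ac_rfl

lemma Emat_eq_sum {a : ℕ → ℂ} (hD0 : D 0 * s 0 = 1) {n k : ℕ} (hk : k ≤ n) :
    Emat s t r u v D a n k = r k * ∑ j ∈ Icc k n, (-1) ^ (j - k) * D (j - k) *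
      ((∑ l ∈ Icc j n, (-v) ^ (l - j) / u ^ (l - j + 1) * a l) * (t j)⁻¹) := by
  set G : ℕ → ℂ := fun j => (-1) ^ (j - k) * D (j - k) *
    ((∑ l ∈ Icc j n, (-v) ^ (l - j) / u ^ (l - j + 1) * a l) * (t j)⁻¹)
  have hsplit : ∑ j ∈ Icc (k + 1) n, G j = G (k + 1) + ∑ j ∈ Icc (k + 2) n, G j := by
    by_cases h : k + 1 ≤ n
    · rw [← add_sum_Ioc_eq_sum_Icc h, ← Icc_add_one_left_eq_Ioc]
      rfl
    · simp [G, Icc_eq_empty h, Icc_eq_empty (show ¬ k + 2 ≤ n by omega)]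
  rw [Emat, if_pos hk, ← add_sum_Ioc_eq_sum_Icc hk, ← Icc_add_one_left_eq_Ioc, hsplit,
    sum_Icc_succ_top (by omega), Icc_self, sum_singleton]
  simp only [G, ← add_sum_Ioc_eq_sum_Icc hk, ← Icc_add_one_left_eq_Ioc, Nat.sub_self]
  have htail : ∑ j ∈ Icc (k + 2) n, (-1) ^ (j - k) * (D (j - k) / t j) *
      ∑ l ∈ Icc j n, (-v) ^ (l - j) / u ^ (l - j + 1) * a l =
      ∑ j ∈ Icc (k + 2) n, (-1) ^ (j - k) * D (j - k) *
        ((∑ l ∈ Icc j n, (-v) ^ (l - j) / u ^ (l - j + 1) * a l) * (t j)⁻¹) :=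
    sum_congr rfl fun j _ => by ring
  rw [htail, eq_inv_of_mul_eq_one_left hD0]
  simp only [div_eq_mul_inv, mul_inv]
  ring

lemma sum_mul_eq_sum_Emat_mul_GmB (hr : ∀ n, r n ≠ 0) (ht : ∀ n, t n ≠ 0) (hu : u ≠ 0)
    (hD : ∀ n, ∑ k ∈ range (n + 1), (-1 : ℂ) ^ k * D k * s (n - k) = if n = 0 then 1 else 0)
    (a x : ℕ → ℂ) (n : ℕ) :
    ∑ k ∈ range (n + 1), a k * x k =
      ∑ k ∈ range (n + 1), Emat s t r u v D a n k * GmB r s t u v x k := by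
  set Sinv := PowerSeries.mk fun k => (-1 : ℂ) ^ k * D k
  set Binv := PowerSeries.mk fun m => (-v) ^ m / u ^ (m + 1)
  set Y := PowerSeries.mk fun k => r k * GmB r s t u v x k with hY
  have hx : PowerSeries.mk x = Binv * PowerSeries.mk fun j => (t j)⁻¹ * coeff j (Sinv * Y) := by
    rw [hY, mk_mul_GmB hr, ← mul_assoc, mk_alternating_mul_mk_eq_one hD, one_mul]
    simp only [coeff_mk, inv_mul_cancel_left₀ (ht _), mk_coeff_eq_self]
    rw [← mul_assoc, mk_mul_bandSeries hu, one_mul]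
  calc ∑ k ∈ range (n + 1), a k * x k
      = ∑ k ∈ range (n + 1), a k *
          coeff k (Binv * PowerSeries.mk fun j => (t j)⁻¹ * coeff j (Sinv * Y)) := by
        simp_rw [← hx, coeff_mk]
    _ = ∑ j ∈ range (n + 1), ((∑ l ∈ Icc j n, coeff (l - j) Binv * a l) * (t j)⁻¹) *
          coeff j (Sinv * Y) := by
        rw [sum_range_mul_coeff_mul]
        simp_rw [coeff_mk, mul_assoc]
    _ = ∑ k ∈ range (n + 1), (∑ j ∈ Icc k n, coeff (j - k) Sinv *
          ((∑ l ∈ Icc j n, coeff (l - j) Binv * a l) * (t j)⁻¹)) * coeff k Y :=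
        sum_range_mul_coeff_mul _ _ _ _
    _ = ∑ k ∈ range (n + 1), Emat s t r u v D a n k * GmB r s t u v x k := by
        refine sum_congr rfl fun k hk => ?_
        rw [Emat_eq_sum (by simpa using hD 0) (Nat.lt_succ_iff.1 (mem_range.1 hk))]
        simp only [Sinv, Binv, Y, coeff_mk]
        ring

lemma GmB_surjective (hr : ∀ n, r n ≠ 0) (ht : ∀ n, t n ≠ 0) (hu : u ≠ 0)
    (hD : ∀ n, ∑ k ∈ range (n + 1), (-1 : ℂ) ^ k * D k * s (n - k) = if n = 0 then 1 else 0) :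
    Function.Surjective (GmB r s t u v) := by
  intro y
  set F := PowerSeries.mk (fun k => (-1 : ℂ) ^ k * D k) * PowerSeries.mk fun k => r k * y k
  set x := fun n => coeff n (PowerSeries.mk (fun m => (-v) ^ m / u ^ (m + 1)) *
    PowerSeries.mk fun j => (t j)⁻¹ * coeff j F)
  refine ⟨x, funext fun n => mul_left_cancel₀ (hr n) ?_⟩
  have hx : bandSeries u v * PowerSeries.mk x = PowerSeries.mk fun j => (t j)⁻¹ * coeff j F := by
    rw [mk_coeff_eq_self, ← mul_assoc, mul_comm (bandSeries u v), mk_mul_bandSeries hu, one_mul]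
  have h := congrArg (coeff n) (mk_mul_GmB (s := s) (t := t) (u := u) (v := v) hr x)
  simp_rw [coeff_mk, hx, coeff_mk, mul_inv_cancel_left₀ (ht _), mk_coeff_eq_self, F,
    ← mul_assoc, mul_comm (PowerSeries.mk s), mk_alternating_mul_mk_eq_one hD, one_mul,
    coeff_mk] at h
  exact h

end Triangle

theorem stmt11_general (r s t : ℕ → ℂ) (u v : ℂ) (D : ℕ → ℂ) (p : ℕ → ℝ) (H : ℝ)
    (hp : ∀ k, 1 < p k) (hpH : ∀ k, p k ≤ H)
    (hr : ∀ n, r n ≠ 0) (ht : ∀ n, t n ≠ 0) (hu : u ≠ 0)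
    (hD : ∀ n, ∑ k ∈ Finset.range (n + 1), (-1 : ℂ) ^ k * D k * s (n - k) =
      if n = 0 then 1 else 0)
    (a : ℕ → ℂ) :
    ((∀ x : ℕ → ℂ, (Summable fun n => ‖GmB r s t u v x n‖ ^ p n) →
      BddAbove (Set.range fun n => ‖∑ k ∈ Finset.range (n + 1), a k * x k‖))
    ↔
    (∃ L : ℕ, 1 ≤ L ∧ ∃ C : ℝ, ∀ n : ℕ,
      ∑ k ∈ Finset.range (n + 1),
        ‖Emat s t r u v D a n k * ((L : ℂ))⁻¹‖ ^ (p k / (p k - 1)) ≤ C)) := by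
  refine Iff.trans ?_ (mapsLpToBounded_iff_conjRowBounded (e := Emat s t r u v D a) hp hpH)
  simp_rw [MapsLpToBounded, sum_mul_eq_sum_Emat_mul_GmB (v := v) hr ht hu hD a]
  refine ⟨fun h y hy => ?_, fun h x => h _⟩
  obtain ⟨x, rfl⟩ := GmB_surjective (v := v) hr ht hu hD y
  exact h x hy

/-- γ-dual of `l(r,s,t,p;B)` for `1 < p_k ≤ H < ∞`: `a` is in the γ-dual iff there is
`L ∈ ℕ` with `sup_n Σ_k |e_{nk} L^{-1}|^{p_k'} < ∞`. -/
theorem stmt11 (r s t : ℕ → ℂ) (u v : ℂ) (D : ℕ → ℂ) (p : ℕ → ℝ) (H : ℝ)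
    (hp : ∀ k, 1 < p k) (hpH : ∀ k, p k ≤ H)
    (hr : ∀ n, r n ≠ 0) (ht : ∀ n, t n ≠ 0) (hs : s 0 ≠ 0) (hu : u ≠ 0) (hv : v ≠ 0)
    (hD : ∀ n, ∑ k ∈ Finset.range (n + 1), (-1 : ℂ) ^ k * D k * s (n - k) =
      if n = 0 then 1 else 0)
    (a : ℕ → ℂ) :
    ((∀ x : ℕ → ℂ, (Summable fun n => ‖GmB r s t u v x n‖ ^ p n) →
      BddAbove (Set.range fun n => ‖∑ k ∈ Finset.range (n + 1), a k * x k‖))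
    ↔
    (∃ L : ℕ, 1 ≤ L ∧ ∃ C : ℝ, ∀ n : ℕ,
      ∑ k ∈ Finset.range (n + 1),
        ‖Emat s t r u v D a n k * ((L : ℂ))⁻¹‖ ^ (p k / (p k - 1)) ≤ C)) :=
  stmt11_general r s t u v D p H hp hpH hr ht hu hD a
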